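/- Let G be a connected non-complete simple graph that is 2K2-free, C3-free and C5-free, let S be any minimal vertex separator of G, and let G1 be a non-trivial connected component of G − S. Then for every edge {u,v} of G1, one of the two endpoints is adjacent to every vertex of S and the other endpoint is adjacent to no vertex of S. -/

import Mathlib

open SimpleGraph

/-- A simple graph is `2K₂`-free: there are no four pairwise distinct vertices `a b c d`
with `ab` and `cd` edges and none of `ac, ad, bc, bd` an edge. -/
def TwoK2Free {V : Type*} (G : SimpleGraph V) : Prop :=
  ¬ ∃ a b c d : V, a ≠ b ∧ a ≠ c ∧ a ≠ d ∧ b ≠ c ∧ b ≠ d ∧ c ≠ d ∧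
    G.Adj a b ∧ G.Adj c d ∧ ¬ G.Adj a c ∧ ¬ G.Adj a d ∧ ¬ G.Adj b c ∧ ¬ G.Adj b d

/-- `S ⊊ V(G)` is a vertex separator: deleting `S` leaves a disconnected graph. -/
def IsSeparator {V : Type*} (G : SimpleGraph V) (S : Set V) : Prop :=
  S ≠ Set.univ ∧ ¬ (G.induce (Sᶜ : Set V)).Connected

/-- A minimal vertex separator: no proper subset is a separator. -/
def IsMinSeparator {V : Type*} (G : SimpleGraph V) (S : Set V) : Prop :=
  IsSeparator G S ∧ ∀ S' : Set V, S' ⊂ S → ¬ IsSeparator G S'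

/-- A connected component is trivial if its support is a single vertex. -/
def IsTrivialComp {α : Type*} {H : SimpleGraph α} (C : H.ConnectedComponent) : Prop :=
  ∃ v, C.supp = {v}

/-- `G` has no induced cycle on `n` vertices. -/
def NoInducedCycle {V : Type*} (n : ℕ) (G : SimpleGraph V) : Prop :=
  ¬ Nonempty (cycleGraph n ↪g G)

/-!
Let `C` be a component of `G - S` other than `G₁`. An edge of `C` and the edge `uv` would form an
induced `2K₂`, so `C` is a single vertex `w`; by minimality of `S` every vertex of `S` has a
neighbour in `C`, hence `S ⊆ N(w)`, while `u, v ∉ N(w)`. For `s ∈ S`, the edges `uv` and `sw`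
force `s` to be adjacent to `u` or `v`; and if `u ~ s` and `v ~ t` with `s, t ∈ S`, then
triangle-freeness makes `u v t w s` an induced pentagon.
-/

namespace SimpleGraph

variable {W : Type*} {H : SimpleGraph W}

theorem Reachable.mem_of_forall_adj_mem {X : Set W} (hX : ∀ ⦃a b⦄, a ∈ X → H.Adj a b → b ∈ X)
    {a b : W} (hab : H.Reachable a b) (ha : a ∈ X) : b ∈ X := by
  obtain ⟨p⟩ := hab
  induction p with
  | nil => exact ha
  | cons h _ ih => exact ih (hX ha h)

theorem exists_connectedComponent_ne_of_not_connected (h : ¬ H.Connected)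
    (C : H.ConnectedComponent) : ∃ C' : H.ConnectedComponent, C' ≠ C := by
  by_contra! hC
  obtain ⟨v, rfl⟩ := C.exists_rep
  exact h ((connected_iff_exists_forall_reachable H).mpr
    ⟨v, fun w => ConnectedComponent.exact (hC _).symm⟩)

theorem ConnectedComponent.supp_subsingleton_of_forall_not_adj (C : H.ConnectedComponent)
    (hC : ∀ x ∈ C.supp, ∀ y, ¬ H.Adj x y) : C.supp.Subsingleton := by
  intro x hx y hy
  obtain ⟨p⟩ := C.reachable_of_mem_supp hx hy
  cases p with
  | nil => rfl
  | cons h _ => exact absurd h (hC x hx _)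

end SimpleGraph

section

variable {V : Type*} {G : SimpleGraph V}

theorem TwoK2Free.cross_adj (h : TwoK2Free G) {a b c d : V} (hab : G.Adj a b)
    (hcd : G.Adj c d) : G.Adj a c ∨ G.Adj a d ∨ G.Adj b c ∨ G.Adj b d := by
  by_contra! hn
  obtain ⟨hac, had, hbc, hbd⟩ := hn
  refine h ⟨a, b, c, d, hab.ne, ?_, ?_, ?_, ?_, hcd.ne, hab, hcd, hac, had, hbc, hbd⟩
  · rintro rfl; exact hbc hab.symm
  · rintro rfl; exact hbd hab.symm
  · rintro rfl; exact hac hab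
  · rintro rfl; exact had hab

theorem TwoK2Free.connectedComponentMk_induce_eq_of_adj (h : TwoK2Free G) {T : Set V}
    {u v p q : T} (huv : (G.induce T).Adj u v) (hpq : (G.induce T).Adj p q) :
    (G.induce T).connectedComponentMk u = (G.induce T).connectedComponentMk p := by
  have mk_eq {x y : T} (hxy : G.Adj x y) := ConnectedComponent.connectedComponentMk_eq_of_adj
    (G := G.induce T) hxy
  rcases h.cross_adj huv hpq with h | h | h | h
  · exact mk_eq h
  · exact (mk_eq h).trans (mk_eq hpq).symm
  · exact (mk_eq huv).trans (mk_eq h)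
  · exact (mk_eq huv).trans ((mk_eq h).trans (mk_eq hpq).symm)

theorem NoInducedCycle.three_not_adj (h : NoInducedCycle 3 G) {a b c : V} (hab : G.Adj a b)
    (hbc : G.Adj b c) : ¬ G.Adj a c := by
  intro hac
  have := hab.ne; have := hbc.ne; have := hac.ne
  have := hab.symm; have := hbc.symm; have := hac.symm
  refine h ⟨⟨![a, b, c], fun i j hij => ?_⟩, fun {i j} => ?_⟩
  · fin_cases i <;> fin_cases j <;> simp_all
  · change G.Adj (![a, b, c] i) (![a, b, c] j) ↔ (cycleGraph 3).Adj i j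
    fin_cases i <;> fin_cases j <;> simp_all [cycleGraph_adj] <;> decide

theorem NoInducedCycle.false_of_five_cycle (h : NoInducedCycle 5 G) {a b c d e : V}
    (hab : G.Adj a b) (hbc : G.Adj b c) (hcd : G.Adj c d) (hde : G.Adj d e) (hea : G.Adj e a)
    (hac : ¬ G.Adj a c) (had : ¬ G.Adj a d) (hbd : ¬ G.Adj b d) (hbe : ¬ G.Adj b e)
    (hce : ¬ G.Adj c e) : False := by
  -- Vertices two steps apart are distinct, since otherwise a missing chord would be an edge.
  have : a ≠ c := by rintro rfl; exact had hcd
  have : a ≠ d := by rintro rfl; exact hbd hab.symm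
  have : b ≠ d := by rintro rfl; exact hbe hde
  have : b ≠ e := by rintro rfl; exact hce hbc.symm
  have : c ≠ e := by rintro rfl; exact hac hea.symm
  have := hab.ne; have := hbc.ne; have := hcd.ne; have := hde.ne; have := hea.ne
  have := hab.symm; have := hbc.symm; have := hcd.symm; have := hde.symm; have := hea.symm
  refine h ⟨⟨![a, b, c, d, e], fun i j hij => ?_⟩, fun {i j} => ?_⟩
  · fin_cases i <;> fin_cases j <;> simp_all
  · change G.Adj (![a, b, c, d, e] i) (![a, b, c, d, e] j) ↔ (cycleGraph 5).Adj i j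
    fin_cases i <;> fin_cases j <;> simp_all [cycleGraph_adj, adj_comm] <;> decide

theorem edge_complete_anticomplete_of_subset_neighborSet (h2k2 : TwoK2Free G)
    (hc3 : NoInducedCycle 3 G) (hc5 : NoInducedCycle 5 G) {S : Set V} {u v w : V}
    (hSw : S ⊆ G.neighborSet w) (huv : G.Adj u v) (huw : ¬ G.Adj u w) (hvw : ¬ G.Adj v w) :
    ((∀ s ∈ S, G.Adj u s) ∧ (∀ s ∈ S, ¬ G.Adj v s)) ∨
      ((∀ s ∈ S, G.Adj v s) ∧ (∀ s ∈ S, ¬ G.Adj u s)) := by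
  have hcover : ∀ s ∈ S, G.Adj u s ∨ G.Adj v s := fun s hs => by
    rcases h2k2.cross_adj huv (hSw hs).symm with h | h | h | h <;> tauto
  -- Triangle-freeness supplies the missing chords of the pentagon `u v t w s`.
  have hexcl : ∀ s ∈ S, ∀ t ∈ S, G.Adj u s → ¬ G.Adj v t := fun s hs t ht hus hvt =>
    hc5.false_of_five_cycle huv hvt (hSw ht).symm (hSw hs) hus.symm
      (hc3.three_not_adj huv hvt) huw hvw (hc3.three_not_adj huv.symm hus)
      (hc3.three_not_adj (hSw ht).symm (hSw hs))
  by_cases hv : ∃ t ∈ S, G.Adj v t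
  · obtain ⟨t, ht, hvt⟩ := hv
    have hu : ∀ s ∈ S, ¬ G.Adj u s := fun s hs hus => hexcl s hs t ht hus hvt
    exact Or.inr ⟨fun s hs => (hcover s hs).resolve_left (hu s hs), hu⟩
  · push Not at hv
    exact Or.inl ⟨fun s hs => (hcover s hs).resolve_right (hv s hs), hv⟩

namespace IsMinSeparator

variable {S : Set V}

theorem exists_adj_mem_supp (hS : IsMinSeparator G S) {s : V} (hs : s ∈ S)
    (C : (G.induce Sᶜ).ConnectedComponent) : ∃ x ∈ C.supp, G.Adj s x := by
  by_contra! hnone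
  refine hS.2 (S \ {s}) (Set.sdiff_singleton_ssubset.mpr hs) ⟨fun h => ?_, fun hconn => ?_⟩
  · exact (h ▸ Set.mem_univ s).2 rfl
  · -- As `s` has no neighbour in `C`, putting `s` back does not enlarge `C`.
    let X : Set ((S \ {s})ᶜ : Set V) :=
      {x | ∃ hx : x.1 ∈ Sᶜ, (G.induce Sᶜ).connectedComponentMk ⟨x, hx⟩ = C}
    have hX : ∀ ⦃a b⦄, a ∈ X → (G.induce (S \ {s})ᶜ).Adj a b → b ∈ X := by
      rintro a b ⟨ha, hC⟩ hab
      have hb : b.1 ∈ Sᶜ := by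
        intro hbS
        have hbs : b.1 = s := by_contra fun hne => b.2 ⟨hbS, hne⟩
        have hba : G.Adj b a := hab.symm
        exact hnone ⟨a, ha⟩ hC (by rwa [hbs] at hba)
      exact ⟨hb, (ConnectedComponent.connectedComponentMk_eq_of_adj
        (G := G.induce Sᶜ) (v := ⟨a, ha⟩) (w := ⟨b, hb⟩) hab).symm.trans hC⟩
    obtain ⟨c, rfl⟩ := C.exists_rep
    obtain ⟨hsS, -⟩ :=
      (hconn.preconnected ⟨c, fun h => c.2 h.1⟩ ⟨s, by simp⟩).mem_of_forall_adj_mem hX ⟨c.2, rfl⟩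
    exact hsS hs

theorem exists_subset_neighborSet_of_supp_subsingleton (hS : IsMinSeparator G S)
    (C : (G.induce Sᶜ).ConnectedComponent) (hC : C.supp.Subsingleton) :
    ∃ w ∈ C.supp, S ⊆ G.neighborSet w := by
  obtain ⟨w, hw⟩ := C.nonempty_supp
  refine ⟨w, hw, fun s hs => ?_⟩
  obtain ⟨x, hx, hsx⟩ := hS.exists_adj_mem_supp hs C
  exact (hC hx hw ▸ hsx).symm

end IsMinSeparator

end

theorem edge_endpoints_universal_or_isolated {V : Type*} (G : SimpleGraph V)
    (h2k2 : TwoK2Free G) (hc3 : NoInducedCycle 3 G) (hc5 : NoInducedCycle 5 G)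
    (S : Set V) (hS : IsMinSeparator G S)
    (G1 : (G.induce (Sᶜ : Set V)).ConnectedComponent) :
    ∀ u v : (Sᶜ : Set V), u ∈ G1.supp → v ∈ G1.supp →
      (G.induce (Sᶜ : Set V)).Adj u v →
      ((∀ s ∈ S, G.Adj (u : V) s) ∧ (∀ s ∈ S, ¬ G.Adj (v : V) s)) ∨
      ((∀ s ∈ S, G.Adj (v : V) s) ∧ (∀ s ∈ S, ¬ G.Adj (u : V) s)) := by
  intro u v hu hv huv
  obtain ⟨C, hC⟩ := exists_connectedComponent_ne_of_not_connected hS.1.2 G1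
  have hC_edgeless : ∀ x ∈ C.supp, ∀ y, ¬ (G.induce Sᶜ).Adj x y := fun x hx y hxy =>
    hC (hx.symm.trans ((h2k2.connectedComponentMk_induce_eq_of_adj hxy huv).trans hu))
  obtain ⟨w, hw, hSw⟩ := hS.exists_subset_neighborSet_of_supp_subsingleton C
    (C.supp_subsingleton_of_forall_not_adj hC_edgeless)
  have hG1w : ∀ x ∈ G1.supp, ¬ G.Adj x w := fun x hx hxw =>
    hC (hw.symm.trans
      ((ConnectedComponent.connectedComponentMk_eq_of_adj (G := G.induce Sᶜ) hxw).symm.trans hx))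
  exact edge_complete_anticomplete_of_subset_neighborSet h2k2 hc3 hc5 hSw huv
    (hG1w u hu) (hG1w v hv)
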